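/- arXiv:2602.22573 — 6 statements merged into one kernel-verified Lean document; each statement's English description precedes it below -/
import Mathlib

section
/- Let Y ⊆ R^m, x̄ ∈ R^n, ȳ ∈ S_FO(x̄), and let f be twice continuously differentiable near (x̄, ȳ). Suppose: Y is closed in a neighborhood of ȳ; gph N̂_Y is closed in a neighborhood of (ȳ, −∇_y f(x̄, ȳ)); for every sequence x_k → x̄ there exist y_k ∈ S_FO(x_k) with y_k → ȳ; and the only w ∈ R^m satisfying −∇²_{yy} f(x̄, ȳ) w ∈ D_*N̂_Y(ȳ | −∇_y f(x̄, ȳ))(w) is w = 0. Then S_FO has a Lipschitz single-valued localization near (x̄, ȳ). -/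
open Set Filter Topology Metric
open scoped RealInnerProductSpace Pointwise BigOperators

noncomputable section

/-- `R^n` as a Euclidean space. -/
abbrev Eu (n : ℕ) := EuclideanSpace ℝ (Fin n)

/-- The directional neighborhood `V_{ε,δ}(d)` of the origin in direction `d`. -/
def dirNbhd {H : Type*} [NormedAddCommGroup H] [NormedSpace ℝ H] (d : H) (ε δ : ℝ) :
    Set H :=
  {z | z ∈ Metric.ball (0 : H) ε ∧
    (d = 0 ∨ z = 0 ∨ (z ≠ 0 ∧ ‖‖z‖⁻¹ • z - ‖d‖⁻¹ • d‖ ≤ δ))}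

/-- The Fréchet (regular) normal cone to `Ω` at `z` (empty if `z ∉ Ω`). -/
def frechetNC {H : Type*} [NormedAddCommGroup H] [InnerProductSpace ℝ H]
    (Ω : Set H) (z : H) : Set H :=
  {ζ | z ∈ Ω ∧ ∀ ε > 0, ∃ ρ > 0, ∀ z' ∈ Ω, ‖z' - z‖ < ρ → ⟪ζ, z' - z⟫ ≤ ε * ‖z' - z‖}

/-- The limiting (Mordukhovich) normal cone to `Ω` at `z`. -/
def limNC {H : Type*} [NormedAddCommGroup H] [InnerProductSpace ℝ H]
    (Ω : Set H) (z : H) : Set H :=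
  {ζ | ∃ zs ζs : ℕ → H, Tendsto zs atTop (𝓝 z) ∧ Tendsto ζs atTop (𝓝 ζ) ∧
    ∀ k, ζs k ∈ frechetNC Ω (zs k)}

/-- The directional limiting normal cone to `Ω` at `z` in direction `d`. -/
def dirNC {H : Type*} [NormedAddCommGroup H] [InnerProductSpace ℝ H]
    (Ω : Set H) (z d : H) : Set H :=
  {ζ | ∃ (t : ℕ → ℝ) (ds ζs : ℕ → H), (∀ k, 0 < t k) ∧ Tendsto t atTop (𝓝 0) ∧
    Tendsto ds atTop (𝓝 d) ∧ Tendsto ζs atTop (𝓝 ζ) ∧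
    ∀ k, ζs k ∈ frechetNC Ω (z + t k • ds k)}

/-- The contingent (tangent) cone to `Ω` at `z`. -/
def tangentC {H : Type*} [NormedAddCommGroup H] [NormedSpace ℝ H]
    (Ω : Set H) (z : H) : Set H :=
  {d | ∃ (t : ℕ → ℝ) (ds : ℕ → H), (∀ k, 0 < t k) ∧ Tendsto t atTop (𝓝 0) ∧
    Tendsto ds atTop (𝓝 d) ∧ ∀ k, z + t k • ds k ∈ Ω}

/-- The Fréchet normal cone for subsets of a product of inner product spaces,
with the canonical pairing `⟪ζ₁, w₁⟫ + ⟪ζ₂, w₂⟫`. -/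
def frechetNCP {H K : Type*} [NormedAddCommGroup H] [InnerProductSpace ℝ H]
    [NormedAddCommGroup K] [InnerProductSpace ℝ K] (Ω : Set (H × K)) (z : H × K) :
    Set (H × K) :=
  {ζ | z ∈ Ω ∧ ∀ ε > 0, ∃ ρ > 0, ∀ z' ∈ Ω, ‖z' - z‖ < ρ →
    ⟪ζ.1, z'.1 - z.1⟫ + ⟪ζ.2, z'.2 - z.2⟫ ≤ ε * ‖z' - z‖}

/-- The limiting normal cone for subsets of a product of inner product spaces. -/
def limNCP {H K : Type*} [NormedAddCommGroup H] [InnerProductSpace ℝ H]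
    [NormedAddCommGroup K] [InnerProductSpace ℝ K] (Ω : Set (H × K)) (z : H × K) :
    Set (H × K) :=
  {ζ | ∃ zs ζs : ℕ → H × K, Tendsto zs atTop (𝓝 z) ∧ Tendsto ζs atTop (𝓝 ζ) ∧
    ∀ k, ζs k ∈ frechetNCP Ω (zs k)}

/-- The directional limiting normal cone for subsets of a product space. -/
def dirNCP {H K : Type*} [NormedAddCommGroup H] [InnerProductSpace ℝ H]
    [NormedAddCommGroup K] [InnerProductSpace ℝ K] (Ω : Set (H × K)) (z d : H × K) :
    Set (H × K) :=
  {ζ | ∃ (t : ℕ → ℝ) (ds ζs : ℕ → H × K), (∀ k, 0 < t k) ∧ Tendsto t atTop (𝓝 0) ∧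
    Tendsto ds atTop (𝓝 d) ∧ Tendsto ζs atTop (𝓝 ζ) ∧
    ∀ k, ζs k ∈ frechetNCP Ω (z + t k • ds k)}

/-- Directional metric subregularity of the set-valued map `Φ` at `(zbar, wbar)`
in direction `d`. -/
def MetrSubregDir {H K : Type*} [NormedAddCommGroup H] [NormedSpace ℝ H]
    [PseudoMetricSpace K] (Φ : H → Set K) (zbar : H) (wbar : K) (d : H) : Prop :=
  ∃ ε > 0, ∃ δ > 0, ∃ κ > 0, ∀ z : H, z - zbar ∈ dirNbhd d ε δ →
    Metric.infDist z {z' | wbar ∈ Φ z'} ≤ κ * Metric.infDist wbar (Φ z)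

/-- The lower-level solution map `S(x) = argmin_{y ∈ Y} f(x,y)`. -/
def Ssol {n m : ℕ} (Y : Set (EuclideanSpace ℝ (Fin m)))
    (f : EuclideanSpace ℝ (Fin n) → EuclideanSpace ℝ (Fin m) → ℝ)
    (x : EuclideanSpace ℝ (Fin n)) : Set (EuclideanSpace ℝ (Fin m)) :=
  {y | y ∈ Y ∧ ∀ y' ∈ Y, f x y ≤ f x y'}

/-- The partial gradient `∇_y f(x,y)`. -/
def gradY {n m : ℕ} (f : EuclideanSpace ℝ (Fin n) → EuclideanSpace ℝ (Fin m) → ℝ)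
    (x : EuclideanSpace ℝ (Fin n)) (y : EuclideanSpace ℝ (Fin m)) :
    EuclideanSpace ℝ (Fin m) :=
  gradient (f x) y

/-- The partial gradient `∇_x f(x,y)`. -/
def gradX {n m : ℕ} (f : EuclideanSpace ℝ (Fin n) → EuclideanSpace ℝ (Fin m) → ℝ)
    (x : EuclideanSpace ℝ (Fin n)) (y : EuclideanSpace ℝ (Fin m)) :
    EuclideanSpace ℝ (Fin n) :=
  gradient (fun x' => f x' y) x

/-- The first-order (stationary) solution map
`S_FO(x) = {y ∈ Y : 0 ∈ ∇_y f(x,y) + N̂_Y(y)}`. -/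
def SFO {n m : ℕ} (Y : Set (EuclideanSpace ℝ (Fin m)))
    (f : EuclideanSpace ℝ (Fin n) → EuclideanSpace ℝ (Fin m) → ℝ)
    (x : EuclideanSpace ℝ (Fin n)) : Set (EuclideanSpace ℝ (Fin m)) :=
  {y | y ∈ Y ∧ -gradY f x y ∈ frechetNC Y y}

/-- The graph of the Fréchet normal cone map `y ⇉ N̂_Y(y)`. -/
def gphN {m : ℕ} (Y : Set (EuclideanSpace ℝ (Fin m))) :
    Set (EuclideanSpace ℝ (Fin m) × EuclideanSpace ℝ (Fin m)) :=
  {p | p.2 ∈ frechetNC Y p.1}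

/-- `S` has a Lipschitz single-valued localization near `(xbar, ybar)`. -/
def HasLipLoc {n m : ℕ} (S : EuclideanSpace ℝ (Fin n) → Set (EuclideanSpace ℝ (Fin m)))
    (xbar : EuclideanSpace ℝ (Fin n)) (ybar : EuclideanSpace ℝ (Fin m)) : Prop :=
  ∃ (U : Set (EuclideanSpace ℝ (Fin n))) (V : Set (EuclideanSpace ℝ (Fin m)))
    (s : EuclideanSpace ℝ (Fin n) → EuclideanSpace ℝ (Fin m)) (L : NNReal),
      IsOpen U ∧ xbar ∈ U ∧ IsOpen V ∧ ybar ∈ V ∧ LipschitzOnWith L s U ∧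
      (∀ x ∈ U, s x ∈ V) ∧ ∀ x ∈ U, S x ∩ V = {s x}

/-- The inf-compactness condition at `xbar` relative to `ybar ∈ S(xbar)`. -/
def InfCompact {n m : ℕ} (Y : Set (EuclideanSpace ℝ (Fin m)))
    (f : EuclideanSpace ℝ (Fin n) → EuclideanSpace ℝ (Fin m) → ℝ)
    (xbar : EuclideanSpace ℝ (Fin n)) (ybar : EuclideanSpace ℝ (Fin m)) : Prop :=
  ∃ (C : Set (EuclideanSpace ℝ (Fin m))) (α : ℝ) (U : Set (EuclideanSpace ℝ (Fin n))),
    IsCompact C ∧ f xbar ybar < α ∧ U ∈ 𝓝 xbar ∧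
    (∀ x ∈ U, {y | y ∈ Y ∧ f x y ≤ α} ⊆ C) ∧ ∀ x ∈ U, (Ssol Y f x).Nonempty

/-- The strict graphical derivative of a set-valued map with graph `Γ`
at `zbar` for `wbar`, in direction `d`. -/
def sGraphDeriv {H K : Type*} [NormedAddCommGroup H] [NormedSpace ℝ H]
    [NormedAddCommGroup K] [NormedSpace ℝ K] (Γ : Set (H × K)) (zbar : H) (wbar : K)
    (d : H) : Set K :=
  {e | ∃ (zs : ℕ → H × K) (t : ℕ → ℝ) (ds : ℕ → H) (es : ℕ → K),
    (∀ k, zs k ∈ Γ) ∧ Tendsto zs atTop (𝓝 (zbar, wbar)) ∧ (∀ k, 0 < t k) ∧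
    Tendsto t atTop (𝓝 0) ∧ Tendsto ds atTop (𝓝 d) ∧ Tendsto es atTop (𝓝 e) ∧
    ∀ k, ((zs k).1 + t k • ds k, (zs k).2 + t k • es k) ∈ Γ}

/-!
If no constant `L` made `‖y₁ - y₂‖ ≤ L ‖x₁ - x₂‖` hold for stationary pairs near `(x̄, ȳ)`,
normalising the differences of violating pairs by `t = ‖y₁ - y₂‖` and passing to a subsequence
would give a unit direction `w` with `-∇²_yy f(x̄, ȳ) w ∈ D_*N̂_Y(ȳ | -∇_y f(x̄, ȳ))(w)`:
by strict differentiability of `∇_y f`, the normalised differences of `∇_y f` converge to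
`∇²_yy f(x̄, ȳ) w`, the `x`-differences being negligible after normalisation.
The estimate gives uniqueness of stationary points near `ȳ`, inner semicontinuity gives
existence, and selecting them yields the Lipschitz localization.
-/

section StrictDeriv

variable {E F : Type*} [NormedAddCommGroup E] [NormedSpace ℝ E]
  [NormedAddCommGroup F] [NormedSpace ℝ F]

theorem HasStrictFDerivAt.tendsto_smul_sub {G : E → F} {D : E →L[ℝ] F} {a : E}
    (hG : HasStrictFDerivAt G D a) {p q : ℕ → E} {t : ℕ → ℝ} {v : E}
    (hp : Tendsto p atTop (𝓝 a)) (hq : Tendsto q atTop (𝓝 a))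
    (hv : Tendsto (fun k => (t k)⁻¹ • (q k - p k)) atTop (𝓝 v)) :
    Tendsto (fun k => (t k)⁻¹ • (G (q k) - G (p k))) atTop (𝓝 (D v)) := by
  have hrem : Tendsto (fun k => (t k)⁻¹ • (G (q k) - G (p k) - D (q k - p k)))
      atTop (𝓝 0) := by
    have h := hG.isLittleO.comp_tendsto (hq.prodMk_nhds hp)
    exact Asymptotics.isLittleO_one_iff ℝ |>.1 <|
      ((Asymptotics.isBigO_refl (fun k => (t k)⁻¹) atTop).smul_isLittleO h).trans_isBigO
        (hv.isBigO_one ℝ)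
  have hlin := (D.continuous.tendsto v).comp hv
  convert hrem.add hlin using 1
  · ext k
    simp [smul_sub]
  · simp

end StrictDeriv

section GraphDeriv

variable {E F : Type*} [NormedAddCommGroup E] [NormedSpace ℝ E]
  [NormedAddCommGroup F] [NormedSpace ℝ F]
  {Γ : Set (F × F)} {G : E × F → F} {D : E × F →L[ℝ] F} {a : E × F}

theorem neg_mem_sGraphDeriv_of_tendsto (hG : HasStrictFDerivAt G D a)
    {p q : ℕ → E × F} {t : ℕ → ℝ} {w : F}
    (hp : Tendsto p atTop (𝓝 a)) (hq : Tendsto q atTop (𝓝 a))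
    (hpΓ : ∀ k, ((p k).2, -G (p k)) ∈ Γ) (hqΓ : ∀ k, ((q k).2, -G (q k)) ∈ Γ)
    (ht : ∀ k, 0 < t k) (ht0 : Tendsto t atTop (𝓝 0))
    (hv : Tendsto (fun k => (t k)⁻¹ • (q k - p k)) atTop (𝓝 (0, w))) :
    -D (0, w) ∈ sGraphDeriv Γ a.2 (-G a) w := by
  refine ⟨fun k => ((p k).2, -G (p k)), t, fun k => (t k)⁻¹ • ((q k).2 - (p k).2),
    fun k => -((t k)⁻¹ • (G (q k) - G (p k))), hpΓ, ?_, ht, ht0, ?_,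
    (hG.tendsto_smul_sub hp hq hv).neg, fun k => ?_⟩
  · exact hp.snd_nhds.prodMk_nhds (hG.continuousAt.tendsto.comp hp).neg
  · simpa using hv.snd_nhds
  · have htk : t k ≠ 0 := (ht k).ne'
    convert hqΓ k using 2 <;> simp [smul_smul, mul_inv_cancel₀ htk]
    abel

variable [FiniteDimensional ℝ F]

theorem exists_dist_le_of_sGraphDeriv (hG : HasStrictFDerivAt G D a)
    (hcrit : ∀ w, -D (0, w) ∈ sGraphDeriv Γ a.2 (-G a) w → w = 0) :
    ∃ L : NNReal, ∀ᶠ pq : (E × F) × (E × F) in 𝓝 (a, a),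
      (pq.1.2, -G pq.1) ∈ Γ → (pq.2.2, -G pq.2) ∈ Γ →
        dist pq.1.2 pq.2.2 ≤ L * dist pq.1.1 pq.2.1 := by
  by_contra! h
  obtain ⟨B, hB⟩ := (𝓝 (a, a)).exists_antitone_basis
  have hex : ∀ k : ℕ, ∃ pq ∈ B k, (pq.1.2, -G pq.1) ∈ Γ ∧ (pq.2.2, -G pq.2) ∈ Γ ∧
      ((k + 1 : NNReal) : ℝ) * dist pq.1.1 pq.2.1 < dist pq.1.2 pq.2.2 :=
    fun k => frequently_iff.1 (h (k + 1)) (hB.mem k)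
  choose pq hpqB hpΓ hqΓ hlt using hex
  set p := fun k => (pq k).1
  set q := fun k => (pq k).2
  have hpq : Tendsto pq atTop (𝓝 (a, a)) := hB.tendsto hpqB
  set t := fun k => dist (p k).2 (q k).2
  have ht : ∀ k, 0 < t k := fun k => (mul_nonneg (by positivity) dist_nonneg).trans_lt (hlt k)
  have ht0 : Tendsto t atTop (𝓝 0) := by
    simpa using hpq.fst_nhds.snd_nhds.dist hpq.snd_nhds.snd_nhds
  set d := fun k => (t k)⁻¹ • ((q k).2 - (p k).2)
  have hd : ∀ k, d k ∈ sphere (0 : F) 1 := fun k => by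
    simp [d, norm_smul, ← dist_eq_norm, dist_comm, (ht k).ne', t]
  obtain ⟨w, hw, φ, hφ, hdw⟩ := (isCompact_sphere (0 : F) 1).tendsto_subseq hd
  have hu : Tendsto (fun k => (t k)⁻¹ • ((q k).1 - (p k).1)) atTop (𝓝 0) := by
    refine squeeze_zero_norm (fun k => ?_) tendsto_one_div_add_atTop_nhds_zero_nat
    have hk := hlt k
    push_cast at hk
    rw [norm_smul, norm_inv, Real.norm_of_nonneg (ht k).le, ← dist_eq_norm, dist_comm,
      inv_mul_le_iff₀ (ht k), mul_one_div, le_div_iff₀ (by positivity)]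
    linarith
  have hv : Tendsto (fun k => (t (φ k))⁻¹ • (q (φ k) - p (φ k))) atTop (𝓝 (0, w)) :=
    (hu.comp hφ.tendsto_atTop).prodMk_nhds hdw
  have hw0 := hcrit w <| neg_mem_sGraphDeriv_of_tendsto hG
    (hpq.fst_nhds.comp hφ.tendsto_atTop) (hpq.snd_nhds.comp hφ.tendsto_atTop)
    (fun k => hpΓ (φ k)) (fun k => hqΓ (φ k)) (fun k => ht (φ k))
    (ht0.comp hφ.tendsto_atTop) hv
  simp [hw0] at hw

end GraphDeriv

theorem eventually_inter_nonempty_of_seq {X Z : Type*} [TopologicalSpace X]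
    [FirstCountableTopology X] [TopologicalSpace Z] {S : X → Set Z} {x₀ : X} {z₀ : Z}
    (hS : ∀ xs : ℕ → X, Tendsto xs atTop (𝓝 x₀) →
      ∃ zs : ℕ → Z, (∀ k, zs k ∈ S (xs k)) ∧ Tendsto zs atTop (𝓝 z₀))
    {V : Set Z} (hV : V ∈ 𝓝 z₀) : ∀ᶠ x in 𝓝 x₀, (S x ∩ V).Nonempty := by
  refine eventually_iff_seq_eventually.2 fun xs hxs => ?_
  obtain ⟨zs, hzS, hz⟩ := hS xs hxs
  exact (hz.eventually hV).mono fun k hk => ⟨zs k, hzS k, hk⟩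

theorem hasLipLoc_of_eventually_dist_le {n m : ℕ} {S : Eu n → Set (Eu m)}
    {xbar : Eu n} {ybar : Eu m} {L : NNReal}
    (hL : ∀ᶠ pq : (Eu n × Eu m) × (Eu n × Eu m) in 𝓝 ((xbar, ybar), (xbar, ybar)),
      pq.1.2 ∈ S pq.1.1 → pq.2.2 ∈ S pq.2.1 → dist pq.1.2 pq.2.2 ≤ L * dist pq.1.1 pq.2.1)
    (hS : ∀ V ∈ 𝓝 ybar, ∀ᶠ x in 𝓝 xbar, (S x ∩ V).Nonempty) :
    HasLipLoc S xbar ybar := by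
  rw [nhds_prod_eq] at hL
  obtain ⟨r, hr, hLr⟩ := nhds_basis_ball.prod_self.eventually_iff.1 hL
  obtain ⟨δ, hδ, hex⟩ := eventually_nhds_iff_ball.1
    ((hS _ (ball_mem_nhds ybar hr)).and (ball_mem_nhds xbar hr))
  choose! s hsS hsV using fun x hx => (hex x hx).1
  have hdist : ∀ x₁ ∈ ball xbar δ, ∀ x₂ ∈ ball xbar δ, ∀ y₁ ∈ S x₁ ∩ ball ybar r,
      ∀ y₂ ∈ S x₂ ∩ ball ybar r, dist y₁ y₂ ≤ L * dist x₁ x₂ :=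
    fun x₁ hx₁ x₂ hx₂ y₁ hy₁ y₂ hy₂ => hLr (x := ((x₁, y₁), (x₂, y₂)))
      ⟨by rw [← ball_prod_same]; exact ⟨(hex x₁ hx₁).2, hy₁.2⟩,
        by rw [← ball_prod_same]; exact ⟨(hex x₂ hx₂).2, hy₂.2⟩⟩ hy₁.1 hy₂.1
  refine ⟨ball xbar δ, ball ybar r, s, L, isOpen_ball, mem_ball_self hδ, isOpen_ball,
    mem_ball_self hr, LipschitzOnWith.of_dist_le_mul fun x₁ hx₁ x₂ hx₂ =>
      hdist x₁ hx₁ x₂ hx₂ _ ⟨hsS x₁ hx₁, hsV x₁ hx₁⟩ _ ⟨hsS x₂ hx₂, hsV x₂ hx₂⟩, hsV,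
    fun x hx => ?_⟩
  refine Set.eq_singleton_iff_unique_mem.2 ⟨⟨hsS x hx, hsV x hx⟩, fun y hy => ?_⟩
  simpa using hdist x hx x hx y hy (s x) ⟨hsS x hx, hsV x hx⟩

theorem contDiffAt_gradY {n m : ℕ} {f : Eu n → Eu m → ℝ} {p : Eu n × Eu m} {k : ℕ}
    (hf : ContDiffAt ℝ (k + 1) (fun p : Eu n × Eu m => f p.1 p.2) p) :
    ContDiffAt ℝ k (fun p : Eu n × Eu m => gradY f p.1 p.2) p := by
  set F : Eu n × Eu m → ℝ := fun p => f p.1 p.2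
  set φ : (Eu n × Eu m →L[ℝ] ℝ) →L[ℝ] Eu m :=
    (InnerProductSpace.toDual ℝ (Eu m)).symm.toContinuousLinearEquiv.toContinuousLinearMap
      |>.comp
      ((ContinuousLinearMap.compL ℝ (Eu m) (Eu n × Eu m) ℝ).flip
        (ContinuousLinearMap.inr ℝ (Eu n) (Eu m)))
  refine (φ.contDiff.contDiffAt.comp p (hf.fderiv_right le_rfl)).congr_of_eventuallyEq ?_
  filter_upwards [hf.eventually (by simp)] with q hq
  have hF : HasFDerivAt F (fderiv ℝ F q) (q.1, q.2) :=
    (hq.differentiableAt (by simp)).hasFDerivAt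
  have hder : HasFDerivAt (f q.1) ((fderiv ℝ F q).comp (ContinuousLinearMap.inr ℝ _ _)) q.2 :=
    hF.comp q.2 (hasFDerivAt_prodMk_right q.1 q.2)
  simp [gradY, gradient, φ, hder.fderiv]

theorem SFO_eq_setOf_gphN {n m : ℕ} (Y : Set (Eu m)) (f : Eu n → Eu m → ℝ) (x : Eu n) :
    SFO Y f x = {y | (y, -gradY f x y) ∈ gphN Y} :=
  Set.ext fun _ => ⟨fun h => h.2, fun h => ⟨h.1, h⟩⟩

theorem stmt1_general {n m : ℕ} (Y : Set (Eu m)) (f : Eu n → Eu m → ℝ)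
    (xbar : Eu n) (ybar : Eu m)
    (hf : ContDiffAt ℝ 2 (fun p : Eu n × Eu m => f p.1 p.2) (xbar, ybar))
    (hinner : ∀ xs : ℕ → Eu n, Tendsto xs atTop (𝓝 xbar) →
      ∃ ys : ℕ → Eu m, (∀ k, ys k ∈ SFO Y f (xs k)) ∧ Tendsto ys atTop (𝓝 ybar))
    (hcrit : ∀ w : Eu m,
      -(fderiv ℝ (fun y' => gradY f xbar y') ybar w) ∈
        sGraphDeriv (gphN Y) ybar (-gradY f xbar ybar) w → w = 0) :
    HasLipLoc (SFO Y f) xbar ybar := by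
  set G : Eu n × Eu m → Eu m := fun p => gradY f p.1 p.2
  have hG : HasStrictFDerivAt G (fderiv ℝ G (xbar, ybar)) (xbar, ybar) :=
    (contDiffAt_gradY (k := 1) hf).hasStrictFDerivAt one_ne_zero
  have hpartial : ∀ w, fderiv ℝ (fun y' => gradY f xbar y') ybar w =
      fderiv ℝ G (xbar, ybar) (0, w) := fun w =>
    DFunLike.congr_fun (hG.hasFDerivAt.comp ybar (hasFDerivAt_prodMk_right xbar ybar)).fderiv w
  obtain ⟨L, hL⟩ := exists_dist_le_of_sGraphDeriv (Γ := gphN Y) hG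
    fun w hw => hcrit w (by rwa [hpartial])
  refine hasLipLoc_of_eventually_dist_le (L := L) ?_
    fun V hV => eventually_inter_nonempty_of_seq hinner hV
  simpa only [SFO_eq_setOf_gphN, Set.mem_ofPred_eq, G] using hL

/-- localization criterion via the strict graphical derivative of the
graph of the Fréchet normal cone map. -/
theorem stmt1 {n m : ℕ} (Y : Set (Eu m)) (f : Eu n → Eu m → ℝ)
    (xbar : Eu n) (ybar : Eu m) (hybar : ybar ∈ SFO Y f xbar)
    (hf : ContDiffAt ℝ 2 (fun p : Eu n × Eu m => f p.1 p.2) (xbar, ybar))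
    (hYloc : ∃ r > 0, IsClosed (Y ∩ Metric.closedBall ybar r))
    (hGloc : ∃ r > 0,
      IsClosed (gphN Y ∩ Metric.closedBall (ybar, -gradY f xbar ybar) r))
    (hinner : ∀ xs : ℕ → Eu n, Tendsto xs atTop (𝓝 xbar) →
      ∃ ys : ℕ → Eu m, (∀ k, ys k ∈ SFO Y f (xs k)) ∧ Tendsto ys atTop (𝓝 ybar))
    (hcrit : ∀ w : Eu m,
      -(fderiv ℝ (fun y' => gradY f xbar y') ybar w) ∈
        sGraphDeriv (gphN Y) ybar (-gradY f xbar ybar) w → w = 0) :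
    HasLipLoc (SFO Y f) xbar ybar :=
  stmt1_general Y f xbar ybar hf hinner hcrit
end
end

section
/- Let Y ⊆ R^m be a nonempty closed set, F : R^n × R^m → R be continuous, G : R^n × R^m → R^q be continuous, f : R^n × R^m → R be continuously differentiable, and let M := {(x, y) : G(x, y) ≤ 0 componentwise and (y, −∇_y f(x, y)) ∈ gph N̂_Y}. Fix u ∈ R^n and ε, δ > 0, and suppose (x̄, ȳ) ∈ M minimizes F over M ∩ ((x̄ + V_{ε,δ}(u)) × B(ȳ, ε)). Then for every v ∈ R^m there exist ε̄, δ̄ > 0 such that F(x, y) ≥ F(x̄, ȳ) for all (x, y) ∈ M ∩ ((x̄, ȳ) + V_{ε̄,δ̄}(u, v)); that is, (x̄, ȳ) is a local optimal solution of the SCOP problem in direction (u, v) for every v ∈ R^m. -/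
open Set Filter Topology Metric
open scoped RealInnerProductSpace Pointwise BigOperators

noncomputable section

lemma unit_smul_pos {H : Type*} [NormedAddCommGroup H] [NormedSpace ℝ H]
    {c : ℝ} (hc : 0 < c) (x : H) (hx : x ≠ 0) :
    ‖c • x‖⁻¹ • (c • x) = ‖x‖⁻¹ • x := by
  have hxn : (0:ℝ) < ‖x‖ := norm_pos_iff.2 hx
  rw [norm_smul, Real.norm_of_nonneg hc.le, smul_smul]
  congr 1
  have h1 := hc.ne'
  have h2 := hxn.ne'
  field_simp

lemma unit_sub_le {H : Type*} [NormedAddCommGroup H] [NormedSpace ℝ H]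
    {a b : H} (ha : a ≠ 0) :
    ‖‖a‖⁻¹ • a - ‖b‖⁻¹ • b‖ ≤ 2 * ‖a - b‖ / ‖a‖ := by
  have hna : (0:ℝ) < ‖a‖ := norm_pos_iff.2 ha
  rcases eq_or_ne b 0 with rfl | hb
  · simp only [norm_zero, inv_zero, zero_smul, sub_zero]
    rw [norm_smul, Real.norm_of_nonneg (inv_nonneg.2 hna.le), inv_mul_cancel₀ hna.ne']
    rw [mul_div_assoc, div_self hna.ne']
    norm_num
  have hnb : (0:ℝ) < ‖b‖ := norm_pos_iff.2 hb
  have key : ‖a‖⁻¹ • a - ‖b‖⁻¹ • b = ‖a‖⁻¹ • (a - b) + (‖a‖⁻¹ - ‖b‖⁻¹) • b := by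
    module
  rw [key]
  have h1 : ‖‖a‖⁻¹ • (a - b)‖ = ‖a - b‖ / ‖a‖ := by
    rw [norm_smul, Real.norm_of_nonneg (inv_nonneg.2 hna.le)]
    rw [inv_mul_eq_div]
  have h2 : ‖(‖a‖⁻¹ - ‖b‖⁻¹) • b‖ ≤ ‖a - b‖ / ‖a‖ := by
    rw [norm_smul, Real.norm_eq_abs]
    have : ‖a‖⁻¹ - ‖b‖⁻¹ = (‖b‖ - ‖a‖) / (‖a‖ * ‖b‖) := by field_simp
    rw [this, abs_div, abs_of_pos (mul_pos hna hnb)]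
    have habs : |‖b‖ - ‖a‖| ≤ ‖a - b‖ := by
      rw [abs_sub_comm]
      exact (abs_norm_sub_norm_le a b)
    rw [div_mul_eq_mul_div, div_le_div_iff₀ (mul_pos hna hnb) hna]
    calc |‖b‖ - ‖a‖| * ‖b‖ * ‖a‖ ≤ ‖a - b‖ * ‖b‖ * ‖a‖ := by
          gcongr
      _ = ‖a - b‖ * (‖a‖ * ‖b‖) := by ring
  calc ‖‖a‖⁻¹ • (a - b) + (‖a‖⁻¹ - ‖b‖⁻¹) • b‖
      ≤ ‖‖a‖⁻¹ • (a - b)‖ + ‖(‖a‖⁻¹ - ‖b‖⁻¹) • b‖ := norm_add_le _ _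
    _ ≤ ‖a - b‖ / ‖a‖ + ‖a - b‖ / ‖a‖ := by rw [h1]; linarith
    _ = 2 * ‖a - b‖ / ‖a‖ := by ring

/-- a minimizer of (SCOP) over a directional neighborhood in `x` is a
directional local optimal solution of (SCOP) in direction `(u, v)` for every `v`. -/
theorem stmt11 {n m q : ℕ} (Y : Set (Eu m)) (hYne : Y.Nonempty) (hYcl : IsClosed Y)
    (F : Eu n → Eu m → ℝ) (hF : Continuous (fun p : Eu n × Eu m => F p.1 p.2))
    (G : Eu n → Eu m → Fin q → ℝ)
    (hG : Continuous (fun p : Eu n × Eu m => G p.1 p.2))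
    (f : Eu n → Eu m → ℝ) (hf : ContDiff ℝ 1 (fun p : Eu n × Eu m => f p.1 p.2))
    (u : Eu n) (ε δ : ℝ) (hε : 0 < ε) (hδ : 0 < δ)
    (xbar : Eu n) (ybar : Eu m)
    (hfeas : (∀ i, G xbar ybar i ≤ 0) ∧ (ybar, -gradY f xbar ybar) ∈ gphN Y)
    (hmin : ∀ x y, (∀ i, G x y i ≤ 0) → (y, -gradY f x y) ∈ gphN Y →
      x - xbar ∈ dirNbhd u ε δ → y ∈ Metric.ball ybar ε → F xbar ybar ≤ F x y) :
    ∀ v : Eu m, ∃ εb > 0, ∃ δb > 0, ∀ x y,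
      (∀ i, G x y i ≤ 0) → (y, -gradY f x y) ∈ gphN Y →
      (x - xbar, y - ybar) ∈ dirNbhd ((u, v) : Eu n × Eu m) εb δb →
      F xbar ybar ≤ F x y := by
  intro v
  by_cases hu : u = 0
  · refine ⟨ε, hε, δ, hδ, ?_⟩
    intro x y hGxy hNxy hz
    obtain ⟨hball, -⟩ := hz
    rw [mem_ball_zero_iff] at hball
    refine hmin x y hGxy hNxy ⟨?_, Or.inl hu⟩ ?_
    · rw [mem_ball_zero_iff]
      exact lt_of_le_of_lt (norm_fst_le (x - xbar, y - ybar)) hball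
    · rw [mem_ball, dist_eq_norm]
      exact lt_of_le_of_lt (norm_snd_le (x - xbar, y - ybar)) hball
  · set d : Eu n × Eu m := (u, v) with hd_def
    have hd : d ≠ 0 := fun h => hu (congrArg Prod.fst h)
    have hdn : (0:ℝ) < ‖d‖ := norm_pos_iff.2 hd
    have hun : (0:ℝ) < ‖u‖ := norm_pos_iff.2 hu
    set r : ℝ := ‖u‖ / ‖d‖ with hr_def
    have hr : 0 < r := div_pos hun hdn
    refine ⟨ε, hε, min (r / 2) (δ * r / 4), lt_min (by positivity) (by positivity), ?_⟩
    intro x y hGxy hNxy hz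
    obtain ⟨hball, hdir⟩ := hz
    rw [mem_ball_zero_iff] at hball
    refine hmin x y hGxy hNxy ⟨?_, ?_⟩ ?_
    · rw [mem_ball_zero_iff]
      exact lt_of_le_of_lt (norm_fst_le (x - xbar, y - ybar)) hball
    · right
      rcases hdir with h0 | hz0 | ⟨hzne, hcl⟩
      · exact absurd h0 hd
      · exact Or.inl (congrArg Prod.fst hz0)
      · by_cases hx1 : x - xbar = 0
        · exact Or.inl hx1
        · refine Or.inr ⟨hx1, ?_⟩
          set z : Eu n × Eu m := (x - xbar, y - ybar) with hz_def
          have hzn : (0:ℝ) < ‖z‖ := norm_pos_iff.2 hzne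
          set a : Eu n := ‖z‖⁻¹ • (x - xbar) with ha_def
          set b : Eu n := ‖d‖⁻¹ • u with hb_def
          have hfst : (‖z‖⁻¹ • z - ‖d‖⁻¹ • d).1 = a - b := rfl
          have hab : ‖a - b‖ ≤ min (r / 2) (δ * r / 4) := by
            rw [← hfst]
            exact le_trans (norm_fst_le _) hcl
          have hab2 : ‖a - b‖ ≤ r / 2 := le_trans hab (min_le_left _ _)
          have hab4 : ‖a - b‖ ≤ δ * r / 4 := le_trans hab (min_le_right _ _)
          have hbnorm : ‖b‖ = r := by
            rw [hb_def, norm_smul, Real.norm_of_nonneg (inv_nonneg.2 hdn.le),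
              inv_mul_eq_div]
          have hanorm : r / 2 ≤ ‖a‖ := by
            have : ‖b‖ - ‖a - b‖ ≤ ‖a‖ := by
              have := norm_sub_norm_le b a
              have h := norm_sub_le b (b - a)
              calc ‖b‖ - ‖a - b‖ ≤ ‖b‖ - (‖b‖ - ‖a‖) := by
                    have := abs_norm_sub_norm_le a b
                    have h2 : ‖b‖ - ‖a‖ ≤ ‖a - b‖ := by
                      have := abs_norm_sub_norm_le b a
                      rw [norm_sub_rev] at this
                      exact le_trans (le_abs_self _) this
                    linarith
                _ = ‖a‖ := by ring
            linarith [hbnorm ▸ this]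
          have ha : a ≠ 0 := by
            intro h
            rw [h, norm_zero] at hanorm
            linarith
          have hua : ‖a‖⁻¹ • a = ‖x - xbar‖⁻¹ • (x - xbar) :=
            unit_smul_pos (inv_pos.2 hzn) _ hx1
          have hub : ‖b‖⁻¹ • b = ‖u‖⁻¹ • u :=
            unit_smul_pos (inv_pos.2 hdn) _ hu
          calc ‖‖x - xbar‖⁻¹ • (x - xbar) - ‖u‖⁻¹ • u‖
              = ‖‖a‖⁻¹ • a - ‖b‖⁻¹ • b‖ := by rw [hua, hub]
            _ ≤ 2 * ‖a - b‖ / ‖a‖ := unit_sub_le ha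
            _ ≤ 2 * (δ * r / 4) / (r / 2) := by
                apply div_le_div₀ (by positivity) (by linarith) (by positivity) hanorm
            _ = δ := by field_simp; ring
    · rw [mem_ball, dist_eq_norm]
      exact lt_of_le_of_lt (norm_snd_le (x - xbar, y - ybar)) hball
end
end

section
/- Let φ : R^p → R^s be continuously differentiable, Ω ⊆ R^s be closed, z̄ satisfy φ(z̄) ∈ Ω, and let d ∈ R^p satisfy ∇φ(z̄) d ∈ T_Ω(φ(z̄)). If the set-valued map z ⇉ −φ(z) + Ω is metrically subregular at (z̄, 0) in direction d, then d ∈ T_{φ^{-1}(Ω)}(z̄), where φ^{-1}(Ω) := {z : φ(z) ∈ Ω}. -/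
open Set Filter Topology Metric
open scoped RealInnerProductSpace Pointwise BigOperators

noncomputable section

/-!
Take `t k ↓ 0` and `w k → ∇φ(zbar) d` with `φ zbar + t k • w k ∈ Ω`. The first-order expansion
gives `φ (zbar + t k • d) = φ zbar + t k • w k + o(t k)`, so `0` lies within `o(t k)` of
`-φ (zbar + t k • d) + Ω`. The points `zbar + t k • d` lie in the directional neighbourhood of
`zbar`, so subregularity puts them within `o(t k)` of `φ ⁻¹' Ω`, and nearby points of `φ ⁻¹' Ω`
form the required tangent sequence.
-/

section

variable {H : Type*} [NormedAddCommGroup H] [NormedSpace ℝ H]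

lemma smul_mem_dirNbhd {d : H} {ε δ τ : ℝ} (hτ : 0 < τ) (hτε : ‖τ • d‖ < ε) (hδ : 0 ≤ δ) :
    τ • d ∈ dirNbhd d ε δ := by
  refine ⟨mem_ball_zero_iff.2 hτε, ?_⟩
  rcases eq_or_ne d 0 with hd | hd
  · exact Or.inl hd
  · refine Or.inr (Or.inr ⟨smul_ne_zero hτ.ne' hd, ?_⟩)
    have hunit : ‖τ • d‖⁻¹ • τ • d = ‖d‖⁻¹ • d := by
      rw [norm_smul, Real.norm_of_nonneg hτ.le, smul_smul, mul_inv, mul_right_comm,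
        inv_mul_cancel₀ hτ.ne', one_mul]
    rwa [hunit, sub_self, norm_zero]

lemma eventually_smul_mem_dirNbhd (d : H) {ε δ : ℝ} (hε : 0 < ε) (hδ : 0 ≤ δ) :
    ∀ᶠ τ in 𝓝[>] (0 : ℝ), τ • d ∈ dirNbhd d ε δ := by
  have hsmall : ∀ᶠ τ in 𝓝 (0 : ℝ), ‖τ • d‖ < ε := by
    have hcont : Tendsto (fun τ : ℝ => ‖τ • d‖) (𝓝 0) (𝓝 ‖(0 : ℝ) • d‖) :=
      ((continuous_id.smul continuous_const).norm).tendsto 0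
    rw [zero_smul, norm_zero] at hcont
    exact hcont.eventually (eventually_lt_nhds hε)
  filter_upwards [nhdsWithin_le_nhds hsmall, self_mem_nhdsWithin] with τ hτε hτ
  exact smul_mem_dirNbhd hτ hτε hδ

lemma MetrSubregDir.eventually_infDist_le {K : Type*} [PseudoMetricSpace K]
    {Φ : H → Set K} {zbar d : H} {wbar : K} (h : MetrSubregDir Φ zbar wbar d) :
    ∃ κ > 0, ∀ᶠ τ in 𝓝[>] (0 : ℝ),
      infDist (zbar + τ • d) {z | wbar ∈ Φ z} ≤ κ * infDist wbar (Φ (zbar + τ • d)) := by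
  obtain ⟨ε, hε, δ, hδ, κ, hκ, hsub⟩ := h
  refine ⟨κ, hκ, ?_⟩
  filter_upwards [eventually_smul_mem_dirNbhd d hε hδ.le] with τ hτ
  exact hsub _ (by rwa [add_sub_cancel_left])

lemma mem_tangentC_of_tendsto_infDist_div {S : Set H} {z d : H} (hS : S.Nonempty)
    {t : ℕ → ℝ} (ht : ∀ k, 0 < t k) (ht0 : Tendsto t atTop (𝓝 0))
    (hdist : Tendsto (fun k => infDist (z + t k • d) S / t k) atTop (𝓝 0)) :
    d ∈ tangentC S z := by
  have hnear : ∀ k, ∃ u ∈ S, dist (z + t k • d) u < infDist (z + t k • d) S + t k ^ 2 :=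
    fun k => (infDist_lt_iff hS).1 (lt_add_of_pos_right _ (pow_pos (ht k) 2))
  choose u hu hud using hnear
  refine ⟨t, fun k => (t k)⁻¹ • (u k - z), ht, ht0, ?_, fun k => ?_⟩
  · have hbound : ∀ k, dist ((t k)⁻¹ • (u k - z)) d ≤ infDist (z + t k • d) S / t k + t k := by
      intro k
      have htk := ht k
      have hdiff : (t k)⁻¹ • (u k - z) - d = (t k)⁻¹ • (u k - (z + t k • d)) := by
        simp only [smul_sub, smul_add, inv_smul_smul₀ htk.ne']
        abel
      rw [dist_eq_norm, hdiff, norm_smul, Real.norm_of_nonneg (inv_pos.2 htk).le,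
        ← dist_eq_norm, dist_comm, inv_mul_le_iff₀ htk, mul_add, mul_div_cancel₀ _ htk.ne']
      nlinarith [hud k]
    have hlim : Tendsto (fun k => infDist (z + t k • d) S / t k + t k) atTop (𝓝 0) := by
      simpa using hdist.add ht0
    exact tendsto_iff_dist_tendsto_zero.2
      (squeeze_zero (fun _ => dist_nonneg) hbound hlim)
  · rw [smul_inv_smul₀ (ht k).ne', add_sub_cancel]
    exact hu k

end

lemma HasFDerivAt.tendsto_inv_smul_sub_add_smul {H K : Type*}
    [NormedAddCommGroup H] [NormedSpace ℝ H] [NormedAddCommGroup K] [NormedSpace ℝ K]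
    {f : H → K} {f' : H →L[ℝ] K} {z d : H} (hf : HasFDerivAt f f' z)
    {t : ℕ → ℝ} {w : ℕ → K} (ht : ∀ k, t k ≠ 0) (ht0 : Tendsto t atTop (𝓝 0))
    (hw : Tendsto w atTop (𝓝 (f' d))) :
    Tendsto (fun k => (t k)⁻¹ • (f (z + t k • d) - (f z + t k • w k))) atTop (𝓝 0) := by
  have ht0' : Tendsto t atTop (𝓝[≠] 0) :=
    tendsto_nhdsWithin_iff.2 ⟨ht0, Eventually.of_forall ht⟩
  have hquot : Tendsto (fun k => (t k)⁻¹ • (f (z + t k • d) - f z)) atTop (𝓝 (f' d)) := by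
    simpa only [inv_inv] using hf.lim d (tendsto_norm_inv_nhdsNE_zero_atTop.comp ht0')
  have hsplit : ∀ k, (t k)⁻¹ • (f (z + t k • d) - (f z + t k • w k)) =
      (t k)⁻¹ • (f (z + t k • d) - f z) - w k := fun k => by
    rw [← sub_sub, smul_sub, inv_smul_smul₀ (ht k)]
  simpa only [hsplit, sub_self] using hquot.sub hw

lemma infDist_zero_le_norm_sub {K : Type*} [SeminormedAddCommGroup K] {Ω : Set K} {x y : K}
    (hy : y ∈ Ω) : infDist 0 {w | w + x ∈ Ω} ≤ ‖y - x‖ := by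
  have hmem : y - x ∈ {w | w + x ∈ Ω} := by
    show y - x + x ∈ Ω
    rwa [sub_add_cancel]
  simpa only [dist_zero_left] using infDist_le_dist_of_mem (x := 0) hmem

theorem stmt16_general {p s : ℕ} (φ : Eu p → Eu s) (hφ : ContDiff ℝ 1 φ)
    (Ω : Set (Eu s)) (zbar : Eu p) (hzbar : φ zbar ∈ Ω)
    (d : Eu p) (hd : fderiv ℝ φ zbar d ∈ tangentC Ω (φ zbar))
    (hsubreg : MetrSubregDir (fun z : Eu p => {w : Eu s | w + φ z ∈ Ω}) zbar 0 d) :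
    d ∈ tangentC (φ ⁻¹' Ω) zbar := by
  obtain ⟨κ, hκpos, hκ⟩ := hsubreg.eventually_infDist_le
  obtain ⟨t, w, ht, ht0, hw, hmem⟩ := hd
  set r : ℕ → Eu s := fun k => (t k)⁻¹ • (φ (zbar + t k • d) - (φ zbar + t k • w k))
  have hr : Tendsto r atTop (𝓝 0) :=
    ((hφ.differentiable one_ne_zero zbar).hasFDerivAt).tendsto_inv_smul_sub_add_smul
      (fun k => (ht k).ne') ht0 hw
  have ht0' : Tendsto t atTop (𝓝[>] 0) :=
    tendsto_nhdsWithin_iff.2 ⟨ht0, Eventually.of_forall ht⟩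
  have hbound : ∀ᶠ k in atTop, infDist (zbar + t k • d) (φ ⁻¹' Ω) / t k ≤ κ * ‖r k‖ := by
    filter_upwards [ht0'.eventually hκ] with k hk
    have hres : ‖φ zbar + t k • w k - φ (zbar + t k • d)‖ = t k * ‖r k‖ := by
      rw [norm_smul, Real.norm_of_nonneg (inv_pos.2 (ht k)).le, norm_sub_rev,
        mul_inv_cancel_left₀ (ht k).ne']
    rw [div_le_iff₀ (ht k), mul_assoc, mul_comm ‖r k‖, ← hres]
    simpa only [zero_add, preimage] using
      hk.trans (mul_le_mul_of_nonneg_left (infDist_zero_le_norm_sub (hmem k)) hκpos.le)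
  refine mem_tangentC_of_tendsto_infDist_div ⟨zbar, hzbar⟩ ht ht0 ?_
  have hlim : Tendsto (fun k => κ * ‖r k‖) atTop (𝓝 0) := by
    simpa using hr.norm.const_mul κ
  exact squeeze_zero' (Eventually.of_forall fun k => div_nonneg infDist_nonneg (ht k).le)
    hbound hlim

/-- directional metric subregularity implies that directions in the
linearized cone are tangent to the feasible set. -/
theorem stmt16 {p s : ℕ} (φ : Eu p → Eu s) (hφ : ContDiff ℝ 1 φ)
    (Ω : Set (Eu s)) (hΩ : IsClosed Ω) (zbar : Eu p) (hzbar : φ zbar ∈ Ω)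
    (d : Eu p) (hd : fderiv ℝ φ zbar d ∈ tangentC Ω (φ zbar))
    (hsubreg : MetrSubregDir (fun z : Eu p => {w : Eu s | w + φ z ∈ Ω}) zbar 0 d) :
    d ∈ tangentC (φ ⁻¹' Ω) zbar :=
  stmt16_general φ hφ Ω zbar hzbar d hd hsubreg
end
end

section
/- Let Y = [a, b] ⊂ R with a < b, and let N_Y(y) denote the normal cone of convex analysis to Y at y ∈ Y, with N_Y(y) := ∅ for y ∉ Y. Then gph N_Y = ({a} × (−∞, 0]) ∪ ([a, b] × {0}) ∪ ({b} × [0, ∞)) ⊆ R², and for any (ȳ, ζ̄) ∈ gph N_Y the limiting normal cone to gph N_Y at (ȳ, ζ̄) is: R × {0} if ȳ = a and ζ̄ < 0; ((−∞, 0] × [0, ∞)) ∪ (R × {0}) ∪ ({0} × R) if ȳ = a and ζ̄ = 0; {0} × R if a < ȳ < b and ζ̄ = 0; ([0, ∞) × (−∞, 0]) ∪ (R × {0}) ∪ ({0} × R) if ȳ = b and ζ̄ = 0; and R × {0} if ȳ = b and ζ̄ > 0. -/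
open Set Filter Topology Metric
open scoped RealInnerProductSpace Pointwise BigOperators

noncomputable section

/-- The normal cone of convex analysis to `[a,b]` at `y` (empty outside `[a,b]`). -/
def NIcc (a b : ℝ) (y : ℝ) : Set ℝ :=
  {ζ | y ∈ Icc a b ∧ ∀ y' ∈ Icc a b, ζ * (y' - y) ≤ 0}

/-- The graph of the normal cone map of `[a,b]`. -/
def gphNIcc (a b : ℝ) : Set (ℝ × ℝ) := {p | p.2 ∈ NIcc a b p.1}

/-! Away from the corners `(a, 0)` and `(b, 0)` the graph is locally a line, so its Fréchet
normal cone is the orthogonal line there and at all nearby points of the graph; at a corner it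
is the polar of the angle formed by the two branches. Upper bounds for Fréchet normals come from
testing them against directions along which the graph contains a segment. The limiting cone at
a corner collects the corner's own cone and the limits along both branches. The reflection
`(y, ζ) ↦ (-y, -ζ)` maps the graph for `[a, b]` onto the graph for `[-b, -a]` and reduces the
right end to the left one. -/

section NormalCones

variable {H K : Type*} [NormedAddCommGroup H] [InnerProductSpace ℝ H]
  [NormedAddCommGroup K] [InnerProductSpace ℝ K] {Ω : Set (H × K)} {z ζ : H × K}

theorem mem_frechetNCP_of_eventually (hz : z ∈ Ω)
    (h : ∀ᶠ z' in 𝓝 z, z' ∈ Ω → ⟪ζ.1, z'.1 - z.1⟫ + ⟪ζ.2, z'.2 - z.2⟫ ≤ 0) :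
    ζ ∈ frechetNCP Ω z := by
  obtain ⟨ρ, hρ, hball⟩ := Metric.eventually_nhds_iff.1 h
  refine ⟨hz, fun ε hε => ⟨ρ, hρ, fun z' hz' hnear => ?_⟩⟩
  exact (hball (by rwa [dist_eq_norm]) hz').trans (by positivity)

theorem inner_le_zero_of_mem_frechetNCP (hζ : ζ ∈ frechetNCP Ω z) (v : H × K)
    (hv : ∀ᶠ t in 𝓝[>] (0 : ℝ), z + t • v ∈ Ω) : ⟪ζ.1, v.1⟫ + ⟪ζ.2, v.2⟫ ≤ 0 := by
  have hlim : Tendsto (fun ε : ℝ => ε * ‖v‖) (𝓝[>] 0) (𝓝 0) := by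
    simpa using
      ((continuous_mul_const ‖v‖).tendsto' 0 0 (zero_mul _)).mono_left nhdsWithin_le_nhds
  refine ge_of_tendsto hlim (eventually_nhdsWithin_of_forall fun ε (hε : 0 < ε) => ?_)
  obtain ⟨ρ, hρ, hnear⟩ := hζ.2 ε hε
  have hsmall : ∀ᶠ t in 𝓝[>] (0 : ℝ), ‖t • v‖ < ρ := by
    have hcont : Continuous fun t : ℝ => ‖t • v‖ := by fun_prop
    exact ((hcont.tendsto' 0 0 (by simp)).mono_left nhdsWithin_le_nhds).eventually
      (eventually_lt_nhds hρ)
  obtain ⟨t, ht, hmem, htv⟩ := (eventually_mem_nhdsWithin.and (hv.and hsmall)).exists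
  have key := hnear _ hmem (by simpa using htv)
  simp only [Prod.fst_add, Prod.snd_add, add_sub_cancel_left, Prod.smul_fst, Prod.smul_snd,
    inner_smul_right, norm_smul, Real.norm_eq_abs, abs_of_pos (show (0 : ℝ) < t from ht),
    ← mul_add, mul_left_comm ε] at key
  exact le_of_mul_le_mul_left key ht

theorem frechetNCP_subset_limNCP : frechetNCP Ω z ⊆ limNCP Ω z := fun _ hζ =>
  ⟨fun _ => z, fun _ => _, tendsto_const_nhds, tendsto_const_nhds, fun _ => hζ⟩

theorem mem_limNCP_of_mem_closure {S : Set (H × K)} (hz : z ∈ closure S)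
    (h : ∀ z' ∈ S, ζ ∈ frechetNCP Ω z') : ζ ∈ limNCP Ω z := by
  obtain ⟨zs, hzsS, hzs⟩ := mem_closure_iff_seq_limit.1 hz
  exact ⟨zs, fun _ => ζ, hzs, tendsto_const_nhds, fun k => h _ (hzsS k)⟩

theorem limNCP_subset_of_eventually {C : Set (H × K)} (hC : IsClosed C)
    (h : ∀ᶠ z' in 𝓝 z, frechetNCP Ω z' ⊆ C) : limNCP Ω z ⊆ C := by
  rintro ζ ⟨zs, ζs, hzs, hζs, hmem⟩
  exact hC.mem_of_tendsto hζs ((hzs.eventually h).mono fun k hk => hk (hmem k))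

theorem limNCP_eq_of_eventually {C : Set (H × K)} (hC : IsClosed C) (hz : z ∈ Ω)
    (h : ∀ᶠ z' in 𝓝 z, z' ∈ Ω → frechetNCP Ω z' = C) : limNCP Ω z = C := by
  refine (limNCP_subset_of_eventually hC ?_).antisymm ?_
  · filter_upwards [h] with z' hz' ζ' hζ'
    exact hz' hζ'.1 ▸ hζ'
  · exact (h.self_of_nhds hz).symm.subset.trans frechetNCP_subset_limNCP

theorem neg_mem_frechetNCP_neg (hζ : ζ ∈ frechetNCP Ω z) : -ζ ∈ frechetNCP (-Ω) (-z) := by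
  refine ⟨by simpa using hζ.1, fun ε hε => ?_⟩
  obtain ⟨ρ, hρ, hnear⟩ := hζ.2 ε hε
  refine ⟨ρ, hρ, fun z' hz' hz'near => ?_⟩
  have := hnear (-z') hz' (by rwa [← norm_neg, neg_sub', neg_neg])
  rw [show -z' - z = -(z' - -z) by abel, norm_neg] at this
  simp only [Prod.fst_neg, Prod.snd_neg, inner_neg_left, inner_sub_right, inner_neg_right]
    at this ⊢
  linarith

theorem limNCP_neg : limNCP (-Ω) (-z) = -limNCP Ω z := by
  have key : ∀ {Ω : Set (H × K)} {z ζ : H × K}, ζ ∈ limNCP Ω z → -ζ ∈ limNCP (-Ω) (-z) := by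
    rintro Ω z ζ ⟨zs, ζs, hzs, hζs, hmem⟩
    exact ⟨-zs, -ζs, hzs.neg, hζs.neg, fun k => neg_mem_frechetNCP_neg (hmem k)⟩
  ext ζ
  exact ⟨fun h => by simpa using key h, fun h => by simpa using key h⟩

end NormalCones

section IntervalNormalCone

variable {a b y ζ : ℝ}

theorem mem_gphNIcc (hab : a ≤ b) :
    (y, ζ) ∈ gphNIcc a b ↔ y = a ∧ ζ ≤ 0 ∨ y ∈ Icc a b ∧ ζ = 0 ∨ y = b ∧ 0 ≤ ζ := by
  constructor
  · rintro ⟨hy, hζ⟩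
    rcases lt_trichotomy ζ 0 with hneg | rfl | hpos
    · have := hζ a (left_mem_Icc.2 hab)
      exact Or.inl ⟨by nlinarith [hy.1], hneg.le⟩
    · exact Or.inr (Or.inl ⟨hy, rfl⟩)
    · have := hζ b (right_mem_Icc.2 hab)
      exact Or.inr (Or.inr ⟨by nlinarith [hy.2], hpos.le⟩)
  · rintro (⟨rfl, hζ⟩ | ⟨hy, rfl⟩ | ⟨rfl, hζ⟩)
    · exact ⟨left_mem_Icc.2 hab, fun y' hy' =>
        mul_nonpos_of_nonpos_of_nonneg hζ (sub_nonneg.2 hy'.1)⟩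
    · exact ⟨hy, fun y' _ => by simp⟩
    · exact ⟨right_mem_Icc.2 hab, fun y' hy' =>
        mul_nonpos_of_nonneg_of_nonpos hζ (sub_nonpos.2 hy'.2)⟩

theorem left_mem_gphNIcc (hab : a ≤ b) (hζ : ζ ≤ 0) : (a, ζ) ∈ gphNIcc a b :=
  (mem_gphNIcc hab).2 (Or.inl ⟨rfl, hζ⟩)

theorem mk_zero_mem_gphNIcc (hy : y ∈ Icc a b) : (y, 0) ∈ gphNIcc a b :=
  (mem_gphNIcc (hy.1.trans hy.2)).2 (Or.inr (Or.inl ⟨hy, rfl⟩))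

theorem gphNIcc_eq (hab : a ≤ b) :
    gphNIcc a b = {a} ×ˢ Iic 0 ∪ Icc a b ×ˢ {0} ∪ {b} ×ˢ Ici 0 := by
  ext ⟨y, ζ⟩
  simp only [mem_gphNIcc hab, mem_union, mem_prod, mem_singleton_iff, mem_Iic, mem_Ici]
  tauto

theorem gphNIcc_neg (hab : a ≤ b) : gphNIcc (-b) (-a) = -gphNIcc a b := by
  ext ⟨y, ζ⟩
  rw [Set.mem_neg, Prod.neg_mk, mem_gphNIcc hab, mem_gphNIcc (neg_le_neg hab), mem_Icc, mem_Icc]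
  constructor <;> rintro (⟨h₁, h₂⟩ | ⟨⟨h₁, h₂⟩, h₃⟩ | ⟨h₁, h₂⟩)
  all_goals first
    | exact Or.inl ⟨by linarith, by linarith⟩
    | exact Or.inr (Or.inl ⟨⟨by linarith, by linarith⟩, by linarith⟩)
    | exact Or.inr (Or.inr ⟨by linarith, by linarith⟩)

theorem frechetNCP_gphNIcc_left_of_neg (hab : a ≤ b) (hζ : ζ < 0) :
    frechetNCP (gphNIcc a b) (a, ζ) = univ ×ˢ {0} := by
  ext ⟨ξ, η⟩
  constructor
  · intro h
    have up := inner_le_zero_of_mem_frechetNCP h (0, 1) (by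
      filter_upwards [Ioo_mem_nhdsGT (neg_pos.2 hζ)] with t ht
      simpa using left_mem_gphNIcc hab (by linarith [ht.2] : ζ + t ≤ 0))
    have down := inner_le_zero_of_mem_frechetNCP h (0, -1) (by
      filter_upwards [self_mem_nhdsWithin] with t (ht : 0 < t)
      simpa [sub_eq_add_neg] using left_mem_gphNIcc hab (by linarith : ζ - t ≤ 0))
    simp only [RCLike.inner_apply, Real.ringHom_apply, zero_mul, one_mul, zero_add, neg_mul,
      Left.neg_nonpos_iff] at up down
    exact ⟨trivial, le_antisymm up down⟩
  · rintro ⟨-, rfl : η = 0⟩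
    refine mem_frechetNCP_of_eventually (left_mem_gphNIcc hab hζ.le) ?_
    filter_upwards [(continuous_snd.tendsto (a, ζ)).eventually (eventually_lt_nhds hζ)]
      with ⟨y', ζ'⟩ (hζ' : ζ' < 0) hmem
    rcases (mem_gphNIcc hab).1 hmem with ⟨rfl, -⟩ | ⟨-, rfl⟩ | ⟨-, h⟩
    · simp
    · exact absurd hζ' (lt_irrefl 0)
    · linarith

theorem frechetNCP_gphNIcc_of_mem_Ioo (hy : y ∈ Ioo a b) :
    frechetNCP (gphNIcc a b) (y, 0) = {0} ×ˢ univ := by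
  have hab : a ≤ b := (hy.1.trans hy.2).le
  ext ⟨ξ, η⟩
  constructor
  · intro h
    have right := inner_le_zero_of_mem_frechetNCP h (1, 0) (by
      filter_upwards [Ioo_mem_nhdsGT (sub_pos.2 hy.2)] with t ht
      simpa using mk_zero_mem_gphNIcc (b := b) ⟨by linarith [hy.1, ht.1], by linarith [ht.2]⟩)
    have left := inner_le_zero_of_mem_frechetNCP h (-1, 0) (by
      filter_upwards [Ioo_mem_nhdsGT (sub_pos.2 hy.1)] with t ht
      simpa [sub_eq_add_neg] using
        mk_zero_mem_gphNIcc (a := a) (y := y - t) ⟨by linarith [ht.2], by linarith [hy.2, ht.1]⟩)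
    simp only [RCLike.inner_apply, Real.ringHom_apply, one_mul, zero_mul, add_zero, neg_mul,
      Left.neg_nonpos_iff] at right left
    exact ⟨le_antisymm right left, trivial⟩
  · rintro ⟨rfl : ξ = 0, -⟩
    refine mem_frechetNCP_of_eventually (mk_zero_mem_gphNIcc (Ioo_subset_Icc_self hy)) ?_
    filter_upwards [(continuous_fst.tendsto (y, (0 : ℝ))).eventually (Ioo_mem_nhds hy.1 hy.2)]
      with ⟨y', ζ'⟩ (hy' : y' ∈ Ioo a b) hmem
    rcases (mem_gphNIcc hab).1 hmem with ⟨rfl, -⟩ | ⟨-, rfl⟩ | ⟨rfl, -⟩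
    · exact absurd hy'.1 (lt_irrefl _)
    · simp
    · exact absurd hy'.2 (lt_irrefl _)

theorem frechetNCP_gphNIcc_left (hab : a < b) :
    frechetNCP (gphNIcc a b) (a, 0) = Iic 0 ×ˢ Ici 0 := by
  ext ⟨ξ, η⟩
  constructor
  · intro h
    have right := inner_le_zero_of_mem_frechetNCP h (1, 0) (by
      filter_upwards [Ioo_mem_nhdsGT (sub_pos.2 hab)] with t ht
      simpa using
        mk_zero_mem_gphNIcc (a := a) (y := a + t) ⟨by linarith [ht.1], by linarith [ht.2]⟩)
    have down := inner_le_zero_of_mem_frechetNCP h (0, -1) (by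
      filter_upwards [self_mem_nhdsWithin] with t (ht : 0 < t)
      simpa using left_mem_gphNIcc hab.le (neg_nonpos.2 ht.le))
    simp only [RCLike.inner_apply, Real.ringHom_apply, one_mul, zero_mul, add_zero, neg_mul,
      zero_add, Left.neg_nonpos_iff] at right down
    exact ⟨right, down⟩
  · rintro ⟨hξ : ξ ≤ 0, hη : 0 ≤ η⟩
    refine mem_frechetNCP_of_eventually (left_mem_gphNIcc hab.le le_rfl) ?_
    filter_upwards [(continuous_fst.tendsto (a, (0 : ℝ))).eventually (eventually_lt_nhds hab)]
      with ⟨y', ζ'⟩ (hy' : y' < b) hmem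
    rcases (mem_gphNIcc hab.le).1 hmem with ⟨rfl, hζ'⟩ | ⟨hy'', rfl⟩ | ⟨rfl, -⟩
    · simpa using mul_nonpos_of_nonpos_of_nonneg hζ' hη
    · simpa using mul_nonpos_of_nonneg_of_nonpos (sub_nonneg.2 hy''.1) hξ
    · exact absurd hy' (lt_irrefl _)

theorem limNCP_gphNIcc_left_of_neg (hab : a ≤ b) (hζ : ζ < 0) :
    limNCP (gphNIcc a b) (a, ζ) = univ ×ˢ {0} := by
  refine limNCP_eq_of_eventually (isClosed_univ.prod isClosed_singleton)
    (left_mem_gphNIcc hab hζ.le) ?_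
  filter_upwards [(continuous_snd.tendsto (a, ζ)).eventually (eventually_lt_nhds hζ)]
    with ⟨y', ζ'⟩ (hζ' : ζ' < 0) hmem
  rcases (mem_gphNIcc hab).1 hmem with ⟨rfl, -⟩ | ⟨-, rfl⟩ | ⟨-, h⟩
  · exact frechetNCP_gphNIcc_left_of_neg hab hζ'
  · exact absurd hζ' (lt_irrefl 0)
  · exact absurd h hζ'.not_ge

theorem limNCP_gphNIcc_of_mem_Ioo (hy : y ∈ Ioo a b) :
    limNCP (gphNIcc a b) (y, 0) = {0} ×ˢ univ := by
  refine limNCP_eq_of_eventually (isClosed_singleton.prod isClosed_univ)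
    (mk_zero_mem_gphNIcc (Ioo_subset_Icc_self hy)) ?_
  filter_upwards [(continuous_fst.tendsto (y, (0 : ℝ))).eventually (Ioo_mem_nhds hy.1 hy.2)]
    with ⟨y', ζ'⟩ (hy' : y' ∈ Ioo a b) hmem
  rcases (mem_gphNIcc (hy.1.trans hy.2).le).1 hmem with ⟨rfl, -⟩ | ⟨-, rfl⟩ | ⟨rfl, -⟩
  · exact absurd hy'.1 (lt_irrefl _)
  · exact frechetNCP_gphNIcc_of_mem_Ioo hy'
  · exact absurd hy'.2 (lt_irrefl _)

theorem limNCP_gphNIcc_left (hab : a < b) :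
    limNCP (gphNIcc a b) (a, 0) = Iic 0 ×ˢ Ici 0 ∪ univ ×ˢ {0} ∪ {0} ×ˢ univ := by
  have hC : IsClosed (Iic (0 : ℝ) ×ˢ Ici (0 : ℝ) ∪ univ ×ˢ {(0 : ℝ)} ∪ {(0 : ℝ)} ×ˢ univ) :=
    ((isClosed_Iic.prod isClosed_Ici).union (isClosed_univ.prod isClosed_singleton)).union
      (isClosed_singleton.prod isClosed_univ)
  refine (limNCP_subset_of_eventually hC ?_).antisymm ?_
  · filter_upwards [(continuous_fst.tendsto (a, (0 : ℝ))).eventually (eventually_lt_nhds hab)]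
      with ⟨y', ζ'⟩ (hy' : y' < b) ξ hξ
    rcases (mem_gphNIcc hab.le).1 hξ.1 with ⟨rfl, hζ'⟩ | ⟨hy'', rfl⟩ | ⟨rfl, -⟩
    · rcases hζ'.lt_or_eq with hζ' | rfl
      · rw [frechetNCP_gphNIcc_left_of_neg hab.le hζ'] at hξ
        exact Or.inl (Or.inr hξ)
      · rw [frechetNCP_gphNIcc_left hab] at hξ
        exact Or.inl (Or.inl hξ)
    · rcases hy''.1.eq_or_lt with rfl | hay'
      · rw [frechetNCP_gphNIcc_left hab] at hξ
        exact Or.inl (Or.inl hξ)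
      · rw [frechetNCP_gphNIcc_of_mem_Ioo ⟨hay', hy'⟩] at hξ
        exact Or.inr hξ
    · exact absurd hy' (lt_irrefl _)
  · rintro ζ ((hζ | ⟨-, hζ⟩) | ⟨hζ, -⟩)
    · exact frechetNCP_subset_limNCP ((frechetNCP_gphNIcc_left hab).symm ▸ hζ)
    · refine mem_limNCP_of_mem_closure (S := {a} ×ˢ Iio 0) (by simp [closure_prod_eq]) ?_
      rintro ⟨y', ζ'⟩ ⟨rfl, hζ' : ζ' < 0⟩
      rw [frechetNCP_gphNIcc_left_of_neg hab.le hζ']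
      exact ⟨trivial, hζ⟩
    · refine mem_limNCP_of_mem_closure (S := Ioo a b ×ˢ {0})
        (by simp [closure_prod_eq, closure_Ioo hab.ne, hab.le]) ?_
      rintro ⟨y', ζ'⟩ ⟨hy', rfl⟩
      rw [frechetNCP_gphNIcc_of_mem_Ioo hy']
      exact ⟨hζ, trivial⟩

theorem limNCP_gphNIcc_right_of_pos (hab : a ≤ b) (hζ : 0 < ζ) :
    limNCP (gphNIcc a b) (b, ζ) = univ ×ˢ {0} := by
  have := limNCP_gphNIcc_left_of_neg (neg_le_neg hab) (neg_lt_zero.2 hζ)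
  rw [gphNIcc_neg hab, ← Prod.neg_mk, limNCP_neg, neg_eq_iff_eq_neg] at this
  simpa [neg_prod] using this

theorem limNCP_gphNIcc_right (hab : a < b) :
    limNCP (gphNIcc a b) (b, 0) = Ici 0 ×ˢ Iic 0 ∪ univ ×ˢ {0} ∪ {0} ×ˢ univ := by
  have := limNCP_gphNIcc_left (neg_lt_neg hab)
  rw [gphNIcc_neg hab.le, show ((-b, 0) : ℝ × ℝ) = -(b, 0) by simp, limNCP_neg,
    neg_eq_iff_eq_neg] at this
  simpa [neg_prod, union_neg] using this

end IntervalNormalCone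

/-- explicit description of the graph of the normal cone map of an
interval `[a,b]` and of its limiting normal cones. -/
theorem stmt17 (a b : ℝ) (hab : a < b) :
    gphNIcc a b = ({a} ×ˢ Iic (0 : ℝ)) ∪ (Icc a b ×ˢ {(0 : ℝ)}) ∪
      ({b} ×ˢ Ici (0 : ℝ)) ∧
    ∀ ybar ζbar : ℝ, (ybar, ζbar) ∈ gphNIcc a b →
      ((ybar = a ∧ ζbar < 0 →
        limNCP (gphNIcc a b) (ybar, ζbar) = (univ : Set ℝ) ×ˢ {(0 : ℝ)}) ∧
      (ybar = a ∧ ζbar = 0 →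
        limNCP (gphNIcc a b) (ybar, ζbar) =
          (Iic (0 : ℝ) ×ˢ Ici (0 : ℝ)) ∪ ((univ : Set ℝ) ×ˢ {(0 : ℝ)}) ∪
            ({(0 : ℝ)} ×ˢ (univ : Set ℝ))) ∧
      (a < ybar ∧ ybar < b ∧ ζbar = 0 →
        limNCP (gphNIcc a b) (ybar, ζbar) = {(0 : ℝ)} ×ˢ (univ : Set ℝ)) ∧
      (ybar = b ∧ ζbar = 0 →
        limNCP (gphNIcc a b) (ybar, ζbar) =
          (Ici (0 : ℝ) ×ˢ Iic (0 : ℝ)) ∪ ((univ : Set ℝ) ×ˢ {(0 : ℝ)}) ∪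
            ({(0 : ℝ)} ×ˢ (univ : Set ℝ))) ∧
      (ybar = b ∧ 0 < ζbar →
        limNCP (gphNIcc a b) (ybar, ζbar) = (univ : Set ℝ) ×ˢ {(0 : ℝ)})) := by
  refine ⟨gphNIcc_eq hab.le, fun ybar ζbar _ => ⟨?_, ?_, ?_, ?_, ?_⟩⟩
  · rintro ⟨rfl, hζ⟩
    exact limNCP_gphNIcc_left_of_neg hab.le hζ
  · rintro ⟨rfl, rfl⟩
    exact limNCP_gphNIcc_left hab
  · rintro ⟨hay, hyb, rfl⟩
    exact limNCP_gphNIcc_of_mem_Ioo ⟨hay, hyb⟩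
  · rintro ⟨rfl, rfl⟩
    exact limNCP_gphNIcc_right hab
  · rintro ⟨rfl, hζ⟩
    exact limNCP_gphNIcc_right_of_pos hab.le hζ
end
end

section
/- Let y₀ be the unique real number in (1/√2, 1) satisfying (1 − y₀)e^{4y₀} = 1 + y₀. Define F(x₁, x₂, y) := (x₁ − 1/2)² + (x₁ + x₂)(1 + y) − (1 − y)e^{4y} + (y − y₀)³ and f(x₁, x₂, y) := −(x₁ + x₂)e^{−(y+1)²} − e^{−(y−1)²}. Then the point (x̄₁, x̄₂, ȳ) = (1/2, 1/2, y₀) is feasible for the bilevel program, i.e., y₀ ∈ argmin_{y' ∈ R} f(1/2, 1/2, y'), F(1/2, 1/2, y₀) = 0, and (1/2, 1/2, y₀) is a local minimizer of F over the bilevel feasible set {(x₁, x₂, y) ∈ R³ : y ∈ argmin_{y' ∈ R} f(x₁, x₂, y')}: there exists ε > 0 such that F(x₁, x₂, y) ≥ 0 for every (x₁, x₂, y) in this feasible set with ‖(x₁, x₂, y) − (1/2, 1/2, y₀)‖ < ε. -/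
/-
With `s = x₁ + x₂`, the `y`-derivative of the lower-level objective is
`2 e^{-(y+1)²} (s (1 + y) - (1 - y) e^{4y})`. For `s = 1` this is `-2 e^{-(y+1)²} q y` with
`q y = (1 - y) e^{4y} - (1 + y)`; `q` is positive on `(0, 1/2]` and concave on `[1/2, ∞)`,
so `q > 0` on `(0, y₀)` and `q ≤ 0` on `[y₀, ∞)`. As `f (1/2) (1/2)` is even, `y₀` is its
global minimizer. Near `(1/2, 1/2, y₀)` a lower-level minimizer `y` is positive; comparing `f`
at `y` and `-y` gives `s ≤ 1`, and stationarity gives `q y = (s - 1) (1 + y) ≤ 0`, hence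
`y ≥ y₀`. Stationarity also cancels the middle terms of `F`, leaving
`F = (x₁ - 1/2)² + (y - y₀)³ ≥ 0`.
-/

open Set

noncomputable section

/-- The upper-level objective of the modified Mirrlees example. -/
def Fup (y₀ x₁ x₂ y : ℝ) : ℝ :=
  (x₁ - 1/2)^2 + (x₁ + x₂) * (1 + y) - (1 - y) * Real.exp (4*y) + (y - y₀)^3

/-- The lower-level objective of the modified Mirrlees example. -/
def flow (x₁ x₂ y : ℝ) : ℝ :=
  -(x₁ + x₂) * Real.exp (-(y+1)^2) - Real.exp (-(y-1)^2)

open Real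

namespace Mirrlees

def q (y : ℝ) : ℝ := (1 - y) * exp (4 * y) - (1 + y)

lemma hasDerivAt_q (y : ℝ) : HasDerivAt q ((3 - 4 * y) * exp (4 * y) - 1) y :=
  ((((hasDerivAt_id' y).const_sub 1).mul ((hasDerivAt_id' y).const_mul 4).exp).sub
    ((hasDerivAt_id' y).const_add 1)).congr_deriv (by ring)

lemma deriv_q : deriv q = fun y => (3 - 4 * y) * exp (4 * y) - 1 :=
  funext fun y => (hasDerivAt_q y).deriv

lemma hasDerivAt_deriv_q (y : ℝ) : HasDerivAt (deriv q) ((8 - 16 * y) * exp (4 * y)) y := by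
  rw [deriv_q]
  exact ((((hasDerivAt_id' y).const_mul 4).const_sub 3).mul
    ((hasDerivAt_id' y).const_mul 4).exp).sub_const 1 |>.congr_deriv (by ring)

lemma concaveOn_q : ConcaveOn ℝ (Ici (1 / 2)) q := by
  refine concaveOn_of_deriv2_nonpos (convex_Ici _)
    (fun y _ => (hasDerivAt_q y).continuousAt.continuousWithinAt)
    (fun y _ => (hasDerivAt_q y).differentiableAt.differentiableWithinAt)
    (fun y _ => (hasDerivAt_deriv_q y).differentiableAt.differentiableWithinAt) fun y hy => ?_
  rw [interior_Ici] at hy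
  rw [Function.iterate_succ_apply, Function.iterate_one, (hasDerivAt_deriv_q y).deriv]
  exact mul_nonpos_of_nonpos_of_nonneg (by linarith [mem_Ioi.1 hy]) (exp_pos _).le

lemma q_pos_of_le_half {y : ℝ} (hy : 0 < y) (hy' : y ≤ 1 / 2) : 0 < q y := by
  have hexp : 4 * y + 1 < exp (4 * y) := add_one_lt_exp (by positivity)
  have : (1 - y) * (4 * y + 1) < (1 - y) * exp (4 * y) := by gcongr; linarith
  rw [q]
  nlinarith

section Root

variable {y₀ : ℝ} (hy₀ : 1 / 2 < y₀) (hq : q y₀ = 0)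
include hy₀ hq

lemma q_pos_of_mem_Ioo {y : ℝ} (hy : y ∈ Ioo 0 y₀) : 0 < q y := by
  rcases le_or_gt y (1 / 2) with hle | hgt
  · exact q_pos_of_le_half hy.1 hle
  by_contra! hqy
  have hhalf := q_pos_of_le_half (by norm_num) le_rfl
  have := concaveOn_q.lt_right_of_left_lt (mem_Ici.2 le_rfl) (mem_Ici.2 hy₀.le)
    (by rw [openSegment_eq_Ioo hy₀]; exact ⟨hgt, hy.2⟩) (hqy.trans_lt hhalf)
  linarith

lemma q_nonpos_of_le {y : ℝ} (hy : y₀ ≤ y) : q y ≤ 0 := by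
  rcases hy.eq_or_lt with rfl | hlt
  · exact hq.le
  have hhalf := q_pos_of_le_half (by norm_num) le_rfl
  have := concaveOn_q.lt_right_of_left_lt (mem_Ici.2 le_rfl) (mem_Ici.2 (hy₀.trans hlt).le)
    (by rw [openSegment_eq_Ioo (hy₀.trans hlt)]; exact ⟨hy₀, hlt⟩) (hq ▸ hhalf)
  linarith

end Root

lemma exp_neg_sub_one_sq (y : ℝ) : exp (-(y - 1) ^ 2) = exp (4 * y) * exp (-(y + 1) ^ 2) := by
  rw [← exp_add]
  ring_nf

lemma flow_neg (x₁ x₂ y : ℝ) :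
    flow x₁ x₂ (-y) = -(x₁ + x₂) * exp (-(y - 1) ^ 2) - exp (-(y + 1) ^ 2) := by
  simp only [flow]
  ring_nf

lemma hasDerivAt_flow (x₁ x₂ y : ℝ) :
    HasDerivAt (flow x₁ x₂)
      (2 * exp (-(y + 1) ^ 2) * ((x₁ + x₂) * (1 + y) - (1 - y) * exp (4 * y))) y := by
  have hplus : HasDerivAt (fun y : ℝ => -(y + 1) ^ 2) (-(2 * (y + 1))) y :=
    ((((hasDerivAt_id' y).add_const 1).pow 2).neg).congr_deriv (by norm_num)
  have hminus : HasDerivAt (fun y : ℝ => -(y - 1) ^ 2) (-(2 * (y - 1))) y :=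
    ((((hasDerivAt_id' y).sub_const 1).pow 2).neg).congr_deriv (by norm_num)
  refine ((hplus.exp.const_mul (-(x₁ + x₂))).sub hminus.exp).congr_deriv ?_
  rw [exp_neg_sub_one_sq]
  ring

lemma hasDerivAt_flow_half (y : ℝ) :
    HasDerivAt (flow (1 / 2) (1 / 2)) (-(2 * exp (-(y + 1) ^ 2) * q y)) y :=
  (hasDerivAt_flow _ _ y).congr_deriv (by rw [q]; ring)

lemma flow_half_neg (y : ℝ) : flow (1 / 2) (1 / 2) (-y) = flow (1 / 2) (1 / 2) y := by
  rw [flow_neg, flow]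
  ring

lemma flow_half_le_of_q_eq_zero {y₀ : ℝ} (hy₀ : 1 / 2 < y₀) (hq : q y₀ = 0) (y : ℝ) :
    flow (1 / 2) (1 / 2) y₀ ≤ flow (1 / 2) (1 / 2) y := by
  have hdiff : Differentiable ℝ (flow (1 / 2) (1 / 2)) :=
    fun y => (hasDerivAt_flow_half y).differentiableAt
  have hcont := hdiff.continuous
  have hanti : AntitoneOn (flow (1 / 2) (1 / 2)) (Icc 0 y₀) := by
    refine antitoneOn_of_deriv_nonpos (convex_Icc _ _) hcont.continuousOn hdiff.differentiableOn
      fun y hy => ?_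
    rw [interior_Icc] at hy
    rw [(hasDerivAt_flow_half y).deriv, neg_nonpos]
    have := q_pos_of_mem_Ioo hy₀ hq hy
    positivity
  have hmono : MonotoneOn (flow (1 / 2) (1 / 2)) (Ici y₀) := by
    refine monotoneOn_of_deriv_nonneg (convex_Ici _) hcont.continuousOn hdiff.differentiableOn
      fun y hy => ?_
    rw [interior_Ici] at hy
    rw [(hasDerivAt_flow_half y).deriv, neg_nonneg]
    exact mul_nonpos_of_nonneg_of_nonpos (by positivity) (q_nonpos_of_le hy₀ hq (le_of_lt hy))
  wlog hy : 0 ≤ y generalizing y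
  · rw [← flow_half_neg y]
    exact this (-y) (by linarith)
  rcases le_total y y₀ with hle | hge
  · exact hanti ⟨hy, hle⟩ ⟨by linarith, le_rfl⟩ hle
  · exact hmono self_mem_Ici hge hge

section LowerLevelMinimizer

variable {x₁ x₂ y : ℝ} (hmin : ∀ y', flow x₁ x₂ y ≤ flow x₁ x₂ y')
include hmin

lemma add_mul_eq_of_forall_flow_le : (x₁ + x₂) * (1 + y) = (1 - y) * exp (4 * y) := by
  have hderiv := (IsLocalMin.hasDerivAt_eq_zero (Filter.Eventually.of_forall hmin)
    (hasDerivAt_flow x₁ x₂ y))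
  rw [mul_eq_zero, mul_eq_zero] at hderiv
  rcases hderiv with (h | h) | h
  · norm_num at h
  · exact absurd h (exp_pos _).ne'
  · linarith

lemma add_le_one_of_forall_flow_le (hy : 0 < y) : x₁ + x₂ ≤ 1 := by
  have hsymm := hmin (-y)
  rw [flow_neg, flow] at hsymm
  have : exp (-(y + 1) ^ 2) < exp (-(y - 1) ^ 2) := exp_lt_exp.2 (by nlinarith)
  nlinarith

lemma le_of_forall_flow_le {y₀ : ℝ} (hy₀ : 1 / 2 < y₀) (hq : q y₀ = 0) (hy : 0 < y) :
    y₀ ≤ y := by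
  by_contra! hlt
  have hpos := q_pos_of_mem_Ioo hy₀ hq ⟨hy, hlt⟩
  have hs := add_le_one_of_forall_flow_le hmin hy
  rw [q, ← add_mul_eq_of_forall_flow_le hmin] at hpos
  nlinarith

end LowerLevelMinimizer

end Mirrlees

open Mirrlees

theorem stmt18_general (y₀ : ℝ) (hy₀ : y₀ ∈ Ioo (1 / Real.sqrt 2) 1)
    (heq : (1 - y₀) * Real.exp (4*y₀) = 1 + y₀) :
    (∀ y' : ℝ, flow (1/2) (1/2) y₀ ≤ flow (1/2) (1/2) y') ∧
    Fup y₀ (1/2) (1/2) y₀ = 0 ∧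
    ∃ ε > 0, ∀ x₁ x₂ y : ℝ, (∀ y' : ℝ, flow x₁ x₂ y ≤ flow x₁ x₂ y') →
      Real.sqrt ((x₁ - 1/2)^2 + (x₂ - 1/2)^2 + (y - y₀)^2) < ε →
      0 ≤ Fup y₀ x₁ x₂ y := by
  have hhalf : 1 / 2 < y₀ :=
    (one_div_lt_one_div_of_lt (sqrt_pos.2 two_pos) (by linarith [sqrt_two_lt_three_halves])).trans
      hy₀.1
  have hq : q y₀ = 0 := by rw [q, heq, sub_self]
  refine ⟨flow_half_le_of_q_eq_zero hhalf hq, by rw [Fup]; linear_combination -heq,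
    y₀, by linarith, ?_⟩
  intro x₁ x₂ y hmin hdist
  have hclose : |y - y₀| < y₀ :=
    (abs_le_sqrt (by nlinarith [sq_nonneg (x₁ - 1/2), sq_nonneg (x₂ - 1/2)])).trans_lt hdist
  have hy : 0 < y := by linarith [(abs_lt.1 hclose).1]
  have hle := le_of_forall_flow_le hmin hhalf hq hy
  rw [Fup, add_mul_eq_of_forall_flow_le hmin, add_sub_cancel_right]
  exact add_nonneg (sq_nonneg _) (pow_nonneg (sub_nonneg.2 hle) 3)

/-- `(1/2, 1/2, y₀)` is bilevel feasible and a local minimizer of the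
modified Mirrlees bilevel program. -/
theorem stmt18 (y₀ : ℝ) (hy₀ : y₀ ∈ Ioo (1 / Real.sqrt 2) 1)
    (heq : (1 - y₀) * Real.exp (4*y₀) = 1 + y₀)
    (huniq : ∀ y ∈ Ioo (1 / Real.sqrt 2) 1,
      (1 - y) * Real.exp (4*y) = 1 + y → y = y₀) :
    (∀ y' : ℝ, flow (1/2) (1/2) y₀ ≤ flow (1/2) (1/2) y') ∧
    Fup y₀ (1/2) (1/2) y₀ = 0 ∧
    ∃ ε > 0, ∀ x₁ x₂ y : ℝ, (∀ y' : ℝ, flow x₁ x₂ y ≤ flow x₁ x₂ y') →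
      Real.sqrt ((x₁ - 1/2)^2 + (x₂ - 1/2)^2 + (y - y₀)^2) < ε →
      0 ≤ Fup y₀ x₁ x₂ y :=
  stmt18_general y₀ hy₀ heq
end
end

section
/- Let y₀ be the unique real number in (1/√2, 1) satisfying (1 − y₀)e^{4y₀} = 1 + y₀. Define F(x₁, x₂, y) := (x₁ − 1/2)² + (x₁ + x₂)(1 + y) − (1 − y)e^{4y} + (y − y₀)³ and f(x₁, x₂, y) := −(x₁ + x₂)e^{−(y+1)²} − e^{−(y−1)²}. Then (1/2, 1/2, y₀) is not a local minimizer of F over the lower-level stationary set S_FO := {(x₁, x₂, y) ∈ R³ : ∂f/∂y(x₁, x₂, y) = 0}: (1/2, 1/2, y₀) ∈ S_FO with F(1/2, 1/2, y₀) = 0, yet for every ε > 0 there exists (x₁, x₂, y) ∈ S_FO with ‖(x₁, x₂, y) − (1/2, 1/2, y₀)‖ < ε and F(x₁, x₂, y) < 0. Hence the classical first order approach fails at (1/2, 1/2, y₀) for this bilevel program. -/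
open Set

noncomputable section

/-!
Along the lower-level stationary curve `(x₁ + x₂)(1 + y) = (1 - y)e^{4y}` the two middle terms
of `F` cancel, so `F = (x₁ - 1/2)² + (y - y₀)³`. Taking `x₁ = 1/2` and `x₂ = g(y) - 1/2` with
`g(y) = (1 - y)e^{4y}/(1 + y)`, continuous at `y₀` with `g(y₀) = 1`, gives stationary points
tending to `(1/2, 1/2, y₀)` as `y ↑ y₀` on which `F = (y - y₀)³ < 0`.
-/

open Real Filter Topology

lemma hasDerivAt_flow (x₁ x₂ y : ℝ) :
    HasDerivAt (flow x₁ x₂)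
      (-(x₁ + x₂) * (exp (-(y+1)^2) * -(2 * (y+1))) - exp (-(y-1)^2) * -(2 * (y-1))) y := by
  have h₁ : HasDerivAt (fun y' : ℝ => -(y'+1)^2) (-(2 * (y+1))) y :=
    ((((hasDerivAt_id' y).add_const 1).pow 2).neg).congr_deriv (by ring)
  have h₂ : HasDerivAt (fun y' : ℝ => -(y'-1)^2) (-(2 * (y-1))) y :=
    ((((hasDerivAt_id' y).sub_const 1).pow 2).neg).congr_deriv (by ring)
  exact (h₁.exp.const_mul _).sub h₂.exp

/-- `e^{-(y-1)²} = e^{4y} e^{-(y+1)²}` factors the derivative through the stationarity equation. -/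
lemma deriv_flow (x₁ x₂ y : ℝ) :
    deriv (fun y' => flow x₁ x₂ y') y =
      2 * exp (-(y+1)^2) * ((x₁ + x₂) * (1 + y) - (1 - y) * exp (4*y)) := by
  have hshift : exp (-(y-1)^2) = exp (4*y) * exp (-(y+1)^2) := by
    rw [← exp_add]; ring_nf
  rw [(hasDerivAt_flow x₁ x₂ y).deriv, hshift]
  ring

lemma deriv_flow_eq_zero_iff (x₁ x₂ y : ℝ) :
    deriv (fun y' => flow x₁ x₂ y') y = 0 ↔ (x₁ + x₂) * (1 + y) = (1 - y) * exp (4*y) := by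
  rw [deriv_flow, mul_eq_zero, sub_eq_zero, or_iff_right (by positivity)]

lemma Fup_of_stationary {y₀ x₁ x₂ y : ℝ} (h : (x₁ + x₂) * (1 + y) = (1 - y) * exp (4*y)) :
    Fup y₀ x₁ x₂ y = (x₁ - 1/2)^2 + (y - y₀)^3 := by
  rw [Fup, h]; ring

/-- The value of `x₁ + x₂` that makes `y` lower-level stationary. -/
def stationarySum (y : ℝ) : ℝ := (1 - y) * exp (4*y) / (1 + y)

lemma stationarySum_mul {y : ℝ} (hy : 1 + y ≠ 0) :
    stationarySum y * (1 + y) = (1 - y) * exp (4*y) :=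
  div_mul_cancel₀ _ hy

lemma continuousAt_stationarySum {y : ℝ} (hy : 1 + y ≠ 0) : ContinuousAt stationarySum y :=
  ContinuousAt.div (by fun_prop) (by fun_prop) hy

lemma one_add_ne_zero_of_eq {y : ℝ} (h : (1 - y) * exp (4*y) = 1 + y) : 1 + y ≠ 0 := by
  intro hy
  have : y = 1 := by nlinarith [exp_pos (4*y)]
  linarith

theorem stmt19_general (y₀ : ℝ)
    (heq : (1 - y₀) * Real.exp (4*y₀) = 1 + y₀) :
    deriv (fun y' => flow (1/2) (1/2) y') y₀ = 0 ∧
    Fup y₀ (1/2) (1/2) y₀ = 0 ∧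
    ∀ ε > 0, ∃ x₁ x₂ y : ℝ, deriv (fun y' => flow x₁ x₂ y') y = 0 ∧
      Real.sqrt ((x₁ - 1/2)^2 + (x₂ - 1/2)^2 + (y - y₀)^2) < ε ∧
      Fup y₀ x₁ x₂ y < 0 := by
  have hstat₀ : (1/2 + 1/2 : ℝ) * (1 + y₀) = (1 - y₀) * exp (4*y₀) := by rw [heq]; ring
  refine ⟨(deriv_flow_eq_zero_iff _ _ _).2 hstat₀, by rw [Fup_of_stationary hstat₀]; ring, ?_⟩
  intro ε hε
  have hy₀ := one_add_ne_zero_of_eq heq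
  have hsum₀ : stationarySum y₀ = 1 := by rw [stationarySum, heq, div_self hy₀]
  have hdist : Tendsto (fun y => √((1/2 - 1/2)^2 + (stationarySum y - 1/2 - 1/2)^2 + (y - y₀)^2))
      (𝓝 y₀) (𝓝 0) := by
    have := continuousAt_stationarySum hy₀
    convert (show ContinuousAt (fun y => √((1/2 - 1/2)^2 + (stationarySum y - 1/2 - 1/2)^2 +
      (y - y₀)^2)) y₀ by fun_prop).tendsto
    rw [hsum₀]; norm_num
  obtain ⟨y, ⟨hy, hlt⟩, hy_lt⟩ : ∃ y, (1 + y ≠ 0 ∧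
      √((1/2 - 1/2)^2 + (stationarySum y - 1/2 - 1/2)^2 + (y - y₀)^2) < ε) ∧ y < y₀ :=
    ((((continuousAt_const.add continuousAt_id).eventually_ne hy₀).and
      (hdist.eventually (gt_mem_nhds hε))).filter_mono nhdsWithin_le_nhds
      |>.and self_mem_nhdsWithin).exists (f := 𝓝[<] y₀)
  have hstat : (1/2 + (stationarySum y - 1/2)) * (1 + y) = (1 - y) * exp (4*y) := by
    rw [← stationarySum_mul hy]; ring
  refine ⟨1/2, stationarySum y - 1/2, y, (deriv_flow_eq_zero_iff _ _ _).2 hstat, hlt, ?_⟩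
  rw [Fup_of_stationary hstat]
  nlinarith [pow_pos (sub_pos.2 hy_lt) 3]

/-- the classical first-order approach fails at `(1/2, 1/2, y₀)` for
the modified Mirrlees bilevel program: the point is lower-level stationary with
`F = 0`, but arbitrarily close stationary points have negative upper-level value. -/
theorem stmt19 (y₀ : ℝ) (hy₀ : y₀ ∈ Ioo (1 / Real.sqrt 2) 1)
    (heq : (1 - y₀) * Real.exp (4*y₀) = 1 + y₀)
    (huniq : ∀ y ∈ Ioo (1 / Real.sqrt 2) 1,
      (1 - y) * Real.exp (4*y) = 1 + y → y = y₀) :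
    deriv (fun y' => flow (1/2) (1/2) y') y₀ = 0 ∧
    Fup y₀ (1/2) (1/2) y₀ = 0 ∧
    ∀ ε > 0, ∃ x₁ x₂ y : ℝ, deriv (fun y' => flow x₁ x₂ y') y = 0 ∧
      Real.sqrt ((x₁ - 1/2)^2 + (x₂ - 1/2)^2 + (y - y₀)^2) < ε ∧
      Fup y₀ x₁ x₂ y < 0 :=
  stmt19_general y₀ heq
end
end
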